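/- Let q = 2^f and K = 𝔽_q((ϖ)) the field of formal Laurent series over the finite field 𝔽_q with q elements. For every integer n ≥ 0, the image V_n of the fractional ideal 𝔭^{−n} under the quotient map K → K/℘(K) is a finite 𝔽₂-vector space of cardinality 2·q^{⌈n/2⌉}, i.e. of 𝔽₂-dimension 1 + f·⌈n/2⌉, where ⌈x⌉ denotes the smallest integer not less than x. -/

import Mathlib

/-!
Write `℘ y = y² - y`, an additive map in characteristic 2.

* `℘` maps onto `𝔭`: for `z ∈ 𝔭` the series `y = ∑ z^(2^i)` converges and `y² = y - z`.
* Modulo `℘(K)` a term `a ϖ^(-2k)` can be traded for `b ϖ^(-k)` with `b² = a`, so every class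
  meeting `𝔭^{-n}` meets the group `S_n` of series supported in the degrees
  `0, -1, -3, …, -(2⌈n/2⌉ - 1)`, which has `q^(⌈n/2⌉ + 1)` elements.
* If `℘ y ∈ S_n` then `y` is constant: a pole of `y` at the lowest degree `-k` would give
  `℘ y` the coefficient `lc(y)² ≠ 0` in the even degree `-2k`, and if `y - y₀` has lowest
  degree `k > 0`, then `℘ y - ℘ y₀` has the coefficient `-lc(y - y₀) ≠ 0` there.
  Hence `S_n ∩ ℘(K) = ℘(𝔽_q)`, a group of order `q/2`, and `V_n ≅ S_n / ℘(𝔽_q)`.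
-/

open Filter Topology HahnSeries

instance Valued.nonarchimedeanAddGroup {R Γ₀ : Type*} [Ring R]
    [LinearOrderedCommGroupWithZero Γ₀] [Valued R Γ₀] : NonarchimedeanAddGroup R where
  is_nonarchimedean U hU := by
    obtain ⟨γ, hγ⟩ := Valued.mem_nhds_zero.mp hU
    exact ⟨⟨Valued.v.restrict.ltAddSubgroup γ,
      AddSubgroup.isOpen_of_mem_nhds _ (Valued.mem_nhds_zero.mpr ⟨γ, fun _ hx => hx⟩)⟩, hγ⟩

theorem AddSubgroup.card_addSubgroupOf_mul_card_map_mk' {G : Type*} [AddCommGroup G]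
    (W H : AddSubgroup G) :
    Nat.card (W.addSubgroupOf H) * Nat.card (H.map (QuotientAddGroup.mk' W)) = Nat.card H := by
  rw [← AddSubgroup.relIndex_ker, QuotientAddGroup.ker_mk']
  exact (W.addSubgroupOf H).card_mul_index

theorem AddMonoidHom.card_ker_mul_card_range {G G' : Type*} [AddGroup G] [AddGroup G']
    (f : G →+ G') : Nat.card f.ker * Nat.card f.range = Nat.card G := by
  rw [← AddSubgroup.index_ker]
  exact f.ker.card_mul_index

section ArtinSchreier

variable (R : Type*) [CommRing R] [CharP R 2]

def artinSchreier : R →+ R :=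
  AddMonoidHom.mk' (fun x => x ^ 2 - x) fun x y => by rw [CharTwo.add_sq]; ring

variable {R}

@[simp]
theorem artinSchreier_apply (x : R) : artinSchreier R x = x ^ 2 - x := rfl

theorem map_artinSchreier {S : Type*} [CommRing S] [CharP S 2] (g : R →+* S) (x : R) :
    g (artinSchreier R x) = artinSchreier S (g x) := by
  simp

theorem mem_ker_artinSchreier [IsDomain R] {x : R} :
    x ∈ (artinSchreier R).ker ↔ x = 0 ∨ x = 1 := by
  rw [AddMonoidHom.mem_ker, artinSchreier_apply, sq, ← mul_sub_one, mul_eq_zero, sub_eq_zero]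

theorem card_ker_artinSchreier [IsDomain R] : Nat.card (artinSchreier R).ker = 2 := by
  have : ((artinSchreier R).ker : Set R) = {0, 1} := Set.ext fun _ => mem_ker_artinSchreier
  rw [← SetLike.coe_sort_coe, this, Nat.card_coe_set_eq, Set.ncard_pair zero_ne_one]

end ArtinSchreier

namespace LaurentSeries

instance charP {R : Type*} [Ring R] (p : ℕ) [CharP R p] : CharP (LaurentSeries R) p :=
  charP_of_injective_ringHom C_injective p

section Support

variable (R : Type*) [Ring R]

def supportedIn (T : Set ℤ) : AddSubgroup (LaurentSeries R) where
  carrier := {x | ∀ m ∉ T, x.coeff m = 0}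
  zero_mem' _ _ := coeff_zero
  add_mem' ha hb m hm := by rw [coeff_add, ha m hm, hb m hm, add_zero]
  neg_mem' ha m hm := by rw [coeff_neg, ha m hm, neg_zero]

variable {R}

theorem mem_supportedIn {T : Set ℤ} {x : LaurentSeries R} :
    x ∈ supportedIn R T ↔ ∀ m ∉ T, x.coeff m = 0 := Iff.rfl

theorem supportedIn_mono {T T' : Set ℤ} (h : T ⊆ T') : supportedIn R T ≤ supportedIn R T' :=
  fun _ hx m hm => hx m fun hmT => hm (h hmT)

theorem single_mem_supportedIn {T : Set ℤ} {m : ℤ} (hm : m ∈ T) (c : R) :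
    single m c ∈ supportedIn R T :=
  fun _ hk => coeff_single_of_ne fun h => hk (h ▸ hm)

theorem sub_single_mem_supportedIn_Ici {m : ℤ} {x : LaurentSeries R}
    (hx : x ∈ supportedIn R (Set.Ici m)) :
    x - single m (x.coeff m) ∈ supportedIn R (Set.Ici (m + 1)) := by
  intro k hk
  rw [Set.mem_Ici, not_le] at hk
  rcases (Int.lt_add_one_iff.mp hk).lt_or_eq with hlt | rfl
  · rw [coeff_sub, hx k (not_le.mpr hlt), coeff_single_of_ne hlt.ne, sub_zero]
  · rw [coeff_sub, coeff_single_same, sub_self]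

def supportedInEquiv (T : Finset ℤ) : supportedIn R T ≃ (T → R) where
  toFun x m := x.1.coeff m
  invFun g := ⟨⟨fun m => if h : m ∈ T then g ⟨m, h⟩ else 0,
    (T.finite_toSet.subset fun m hm =>
      by_contra fun h => Function.mem_support.mp hm (dif_neg h)).isPWO⟩,
    fun _ hm => dif_neg hm⟩
  left_inv x := by
    ext m
    by_cases hm : m ∈ T
    · simp [hm]
    · simp [hm, x.2 m hm]
  right_inv g := by
    funext m
    simp

theorem card_supportedIn [Finite R] (T : Finset ℤ) :
    Nat.card (supportedIn R T) = Nat.card R ^ T.card := by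
  rw [Nat.card_congr (supportedInEquiv T), Nat.card_fun, Nat.card_eq_finsetCard]

end Support

def reducedSupport (n : ℕ) : Finset ℤ :=
  insert 0 ((Finset.range ((n + 1) / 2)).image fun j : ℕ => -(2 * j + 1 : ℤ))

theorem zero_mem_reducedSupport (n : ℕ) : 0 ∈ reducedSupport n :=
  Finset.mem_insert_self _ _

theorem card_reducedSupport (n : ℕ) : (reducedSupport n).card = (n + 1) / 2 + 1 := by
  rw [reducedSupport, Finset.card_insert_of_notMem (by simp; omega),
    Finset.card_image_of_injective _ (fun i j h => by simp at h; omega), Finset.card_range]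

theorem reducedSupport_subset_succ (n : ℕ) : reducedSupport n ⊆ reducedSupport (n + 1) :=
  Finset.insert_subset_insert _ <| Finset.image_subset_image <|
    Finset.range_subset_range.mpr <| Nat.div_le_div_right (by omega)

theorem neg_mem_reducedSupport_of_odd {n : ℕ} (hn : Odd n) : -(n : ℤ) ∈ reducedSupport n := by
  obtain ⟨k, rfl⟩ := hn
  simp only [reducedSupport, Finset.mem_insert, Finset.mem_image, Finset.mem_range]
  exact Or.inr ⟨k, by omega, by push_cast; ring⟩

theorem reducedSupport_subset_Ici (n : ℕ) : (reducedSupport n : Set ℤ) ⊆ Set.Ici (-n) := by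
  intro m hm
  simp only [reducedSupport, Finset.coe_insert, Finset.coe_image, Finset.coe_range,
    Set.mem_insert_iff, Set.mem_image, Set.mem_Iio] at hm
  rw [Set.mem_Ici]
  omega

theorem reducedSupport_subset_nonpos_odd (n : ℕ) :
    (reducedSupport n : Set ℤ) ⊆ {m | m ≤ 0 ∧ (m = 0 ∨ Odd m)} := by
  intro m hm
  simp only [reducedSupport, Finset.coe_insert, Finset.coe_image, Finset.coe_range,
    Set.mem_insert_iff, Set.mem_image, Set.mem_Iio] at hm
  rcases hm with rfl | ⟨j, -, rfl⟩
  · simp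
  · exact ⟨by omega, Or.inr ⟨-(j + 1), by ring⟩⟩

theorem coeff_sq_sub_self_order_add_order {R : Type*} [Ring R] {y : LaurentSeries R}
    (hy : y.order < 0) : (y ^ 2 - y).coeff (y.order + y.order) = y.leadingCoeff ^ 2 := by
  rw [coeff_sub, sq, coeff_mul_order_add_order, coeff_eq_zero_of_lt_order (by omega), sub_zero, sq]

theorem coeff_sq_sub_self_order {R : Type*} [Ring R] [NoZeroDivisors R] {y : LaurentSeries R}
    (hy : 0 < y.order) : (y ^ 2 - y).coeff y.order = -y.leadingCoeff := by
  have hy0 : y ≠ 0 := by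
    rintro rfl
    simp at hy
  have hsq : (y * y).coeff y.order = 0 :=
    coeff_eq_zero_of_lt_order (by rw [order_mul hy0 hy0]; omega)
  rw [coeff_sub, sq, hsq, zero_sub, leadingCoeff_eq]

variable {F : Type*} [Field F] [CharP F 2]

theorem supportedIn_Ici_one_le_range_artinSchreier :
    supportedIn F (Set.Ici 1) ≤ (artinSchreier (LaurentSeries F)).range := by
  intro z hz
  have hv : Valued.v z ≤ WithZero.exp (-1 : ℤ) :=
    (valuation_le_iff_coeff_lt_eq_zero F).mpr fun m hm => hz m (by simpa using hm)
  have hlim : Tendsto (fun i : ℕ => z ^ 2 ^ i) cofinite (𝓝 0) := by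
    rw [Nat.cofinite_eq_atTop]
    exact (Valued.tendsto_zero_pow_of_le_exp_neg_one hv).comp
      (tendsto_pow_atTop_atTop_of_one_lt one_lt_two)
  obtain ⟨y, hsum⟩ := NonarchimedeanAddGroup.summable_of_tendsto_cofinite_zero hlim
  have hsq : HasSum (fun i : ℕ => z ^ 2 ^ (i + 1)) (y ^ 2) := by
    have h := hsum.map (frobenius (LaurentSeries F) 2) (continuous_pow 2)
    simp only [Function.comp_def, frobenius_def, ← pow_mul, ← pow_succ] at h
    exact h
  have hy : y = z + y ^ 2 := by
    have h := hsum.summable.tsum_eq_zero_add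
    rwa [hsum.tsum_eq, hsq.tsum_eq, pow_zero, pow_one] at h
  exact ⟨-y, by rw [map_neg, artinSchreier_apply]; linear_combination hy⟩

theorem order_eq_zero_of_artinSchreier_mem {y : LaurentSeries F} (hy : y ≠ 0)
    (h : artinSchreier _ y ∈ supportedIn F {m | m ≤ 0 ∧ (m = 0 ∨ Odd m)}) : y.order = 0 := by
  have hlc : y.leadingCoeff ≠ 0 := leadingCoeff_ne_zero.mpr hy
  rcases lt_trichotomy y.order 0 with hneg | hzero | hpos
  · have hcoeff := h (y.order + y.order) fun ⟨_, hm⟩ =>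
      hm.elim (by omega) (Int.not_odd_iff_even.mpr ⟨_, rfl⟩)
    rw [artinSchreier_apply, coeff_sq_sub_self_order_add_order hneg] at hcoeff
    exact absurd ((pow_eq_zero_iff two_ne_zero).mp hcoeff) hlc
  · exact hzero
  · have hcoeff := h y.order fun ⟨hm, _⟩ => by omega
    rw [artinSchreier_apply, coeff_sq_sub_self_order hpos, neg_eq_zero] at hcoeff
    exact absurd hcoeff hlc

theorem eq_C_of_artinSchreier_mem {y : LaurentSeries F}
    (h : artinSchreier _ y ∈ supportedIn F {m | m ≤ 0 ∧ (m = 0 ∨ Odd m)}) :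
    y = C (y.coeff 0) := by
  set u := y - C (y.coeff 0)
  have hu0 : u.coeff 0 = 0 := by simp [u]
  have hu : artinSchreier _ u ∈ supportedIn F {m | m ≤ 0 ∧ (m = 0 ∨ Odd m)} := by
    rw [map_sub, ← map_artinSchreier, C_apply]
    exact sub_mem h (single_mem_supportedIn (by simp) _)
  by_contra hne
  have hu_ne : u ≠ 0 := sub_ne_zero.mpr hne
  have := leadingCoeff_ne_zero.mpr hu_ne
  rw [leadingCoeff_eq, order_eq_zero_of_artinSchreier_mem hu_ne hu] at this
  exact this hu0

theorem artinSchreier_single (m : ℤ) (b : F) :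
    artinSchreier _ (single m b) = single (m + m) (b ^ 2) - single m b := by
  rw [artinSchreier_apply, sq, single_mul_single, sq]

theorem exists_mem_reducedSupport_sub_mem_range [PerfectRing F 2] (n : ℕ) {x : LaurentSeries F}
    (hx : x ∈ supportedIn F (Set.Ici (-n))) :
    ∃ s ∈ supportedIn F (reducedSupport n), x - s ∈ (artinSchreier (LaurentSeries F)).range := by
  induction n generalizing x with
  | zero =>
    refine ⟨single 0 (x.coeff 0), single_mem_supportedIn (zero_mem_reducedSupport 0) _, ?_⟩
    apply supportedIn_Ici_one_le_range_artinSchreier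
    have := sub_single_mem_supportedIn_Ici (m := 0) (by simpa using hx)
    rwa [zero_add] at this
  | succ n ih =>
    set d : ℤ := -((n + 1 : ℕ) : ℤ)
    set a := x.coeff d
    have hx' : x - single d a ∈ supportedIn F (Set.Ici (-n)) := by
      have := sub_single_mem_supportedIn_Ici hx
      rwa [show d + 1 = -n by omega] at this
    rcases Nat.even_or_odd (n + 1) with ⟨k, hk⟩ | hodd
    · obtain ⟨b, hb⟩ := surjective_frobenius F 2 a
      set u : LaurentSeries F := single (-k : ℤ) b
      have hu : artinSchreier _ u = single d a - single (-k : ℤ) b := by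
        rw [artinSchreier_single, ← hb, frobenius_def, show -(k : ℤ) + -k = d by omega]
      obtain ⟨s, hs, hxs⟩ := ih (x := x - artinSchreier _ u) <| by
        rw [hu, sub_sub_eq_add_sub, add_sub_right_comm]
        exact add_mem hx' (single_mem_supportedIn (by simp; omega) _)
      refine ⟨s, supportedIn_mono (by simpa using reducedSupport_subset_succ n) hs, ?_⟩
      rw [show x - s = x - artinSchreier _ u - s + artinSchreier _ u by abel]
      exact add_mem hxs ⟨u, rfl⟩
    · obtain ⟨s, hs, hxs⟩ := ih hx'
      refine ⟨s + single d a, add_mem ?_ ?_, ?_⟩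
      · exact supportedIn_mono (by simpa using reducedSupport_subset_succ n) hs
      · exact single_mem_supportedIn (neg_mem_reducedSupport_of_odd hodd) _
      · rwa [sub_add_eq_sub_sub_swap]

theorem map_mk'_supportedIn_Ici [PerfectRing F 2] (n : ℕ) :
    (supportedIn F (Set.Ici (-n))).map
        (QuotientAddGroup.mk' (artinSchreier (LaurentSeries F)).range)
      = (supportedIn F (reducedSupport n)).map
          (QuotientAddGroup.mk' (artinSchreier (LaurentSeries F)).range) := by
  refine le_antisymm ?_ (AddSubgroup.map_mono (supportedIn_mono (reducedSupport_subset_Ici n)))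
  rintro _ ⟨x, hx, rfl⟩
  obtain ⟨s, hs, hxs⟩ := exists_mem_reducedSupport_sub_mem_range n hx
  exact ⟨s, hs, (QuotientAddGroup.mk'_eq_mk' _).mpr ⟨x - s, hxs, by abel⟩⟩

theorem card_range_artinSchreier_addSubgroupOf_mul_two [Finite F] {T : Set ℤ} (h0 : 0 ∈ T)
    (hT : T ⊆ {m | m ≤ 0 ∧ (m = 0 ∨ Odd m)}) :
    Nat.card ((artinSchreier (LaurentSeries F)).range.addSubgroupOf (supportedIn F T)) * 2
      = Nat.card F := by
  let ψ : F →+ supportedIn F T :=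
    ((artinSchreier _).comp (C : F →+* LaurentSeries F).toAddMonoidHom).codRestrict _ fun c => by
      rw [AddMonoidHom.comp_apply, RingHom.toAddMonoidHom_eq_coe, AddMonoidHom.coe_coe,
        ← map_artinSchreier, C_apply]
      exact single_mem_supportedIn h0 _
  have hrange : ψ.range = (artinSchreier _).range.addSubgroupOf (supportedIn F T) := by
    ext ⟨s, hs⟩
    rw [AddSubgroup.mem_addSubgroupOf, AddMonoidHom.mem_range, AddMonoidHom.mem_range]
    constructor
    · rintro ⟨c, hc⟩
      exact ⟨C c, congrArg Subtype.val hc⟩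
    · rintro ⟨y, rfl⟩
      refine ⟨y.coeff 0, Subtype.ext ?_⟩
      simp only [ψ, AddMonoidHom.codRestrict_apply, AddMonoidHom.comp_apply,
        RingHom.toAddMonoidHom_eq_coe, AddMonoidHom.coe_coe]
      rw [← eq_C_of_artinSchreier_mem (supportedIn_mono hT hs)]
  have hker : ψ.ker = (artinSchreier F).ker := by
    ext c
    simp only [ψ, AddMonoidHom.mem_ker, AddMonoidHom.codRestrict_apply, AddMonoidHom.comp_apply,
      RingHom.toAddMonoidHom_eq_coe, AddMonoidHom.coe_coe, ← map_artinSchreier]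
    rw [← ZeroMemClass.coe_eq_zero, map_eq_zero_iff _ C_injective]
  rw [← hrange, ← card_ker_artinSchreier (R := F), ← hker, mul_comm]
  exact ψ.card_ker_mul_card_range

end LaurentSeries

theorem filtration_step_card_general
    (f : ℕ)
    (F : Type*) [Field F] [Fintype F] (hcard : Fintype.card F = 2 ^ f)
    (W : AddSubgroup (LaurentSeries F))
    (hW : (W : Set (LaurentSeries F)) = Set.range (fun y : LaurentSeries F => y ^ 2 - y))
    (V : ℕ → AddSubgroup (LaurentSeries F))
    (hV : ∀ n : ℕ, (V n : Set (LaurentSeries F)) =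
      {x : LaurentSeries F | ∀ m : ℤ, m < -(n : ℤ) → x.coeff m = 0}) :
    ∀ n : ℕ,
      Nat.card (AddSubgroup.map (QuotientAddGroup.mk' W) (V n))
        = 2 * (2 ^ f) ^ ((n + 1) / 2) := by
  have : CharP F 2 := charP_of_card_eq_prime_pow hcard
  obtain rfl : W = (artinSchreier (LaurentSeries F)).range := SetLike.coe_injective hW
  intro n
  have hVn : V n = LaurentSeries.supportedIn F (Set.Ici (-n)) :=
    SetLike.coe_injective ((hV n).trans (by ext; simp [LaurentSeries.mem_supportedIn]))
  have hq : Nat.card F = 2 ^ f := by rw [Nat.card_eq_fintype_card, hcard]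
  set S := LaurentSeries.supportedIn F (LaurentSeries.reducedSupport n)
  set M := Nat.card (S.map (QuotientAddGroup.mk' (artinSchreier (LaurentSeries F)).range))
  set I := Nat.card ((artinSchreier (LaurentSeries F)).range.addSubgroupOf S)
  have hS : I * M = (2 ^ f) ^ ((n + 1) / 2 + 1) := by
    rw [AddSubgroup.card_addSubgroupOf_mul_card_map_mk', LaurentSeries.card_supportedIn,
      LaurentSeries.card_reducedSupport, hq]
  have hI : I * 2 = 2 ^ f := by
    rw [← hq]
    exact LaurentSeries.card_range_artinSchreier_addSubgroupOf_mul_two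
      (LaurentSeries.zero_mem_reducedSupport n) (LaurentSeries.reducedSupport_subset_nonpos_odd n)
  rw [hVn, LaurentSeries.map_mk'_supportedIn_Ici]
  refine Nat.eq_of_mul_eq_mul_left (by positivity : 0 < 2 ^ f) ?_
  calc 2 ^ f * M = I * M * 2 := by rw [← hI]; ring
    _ = 2 ^ f * (2 * (2 ^ f) ^ ((n + 1) / 2)) := by rw [hS]; ring

/-- **Cardinality of the filtration steps `V_n` of `K/℘(K)`, for `K = 𝔽_q((ϖ))`, `q = 2^f`.**
Let `K = 𝔽_q((ϖ))` with `q = 2^f`, let `W = ℘(K) = {y² - y : y ∈ K}` and, for `n ∈ ℕ`, let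
`V n` be the additive subgroup `𝔭^{-n} = ϖ^{-n}𝔬` of `K`, consisting of Laurent series
whose coefficients vanish in degrees `< -n`.  Then for every `n ≥ 0` the image `V_n` of
`𝔭^{-n}` under the quotient map `K → K/℘(K)` is finite of cardinality `2·q^{⌈n/2⌉}`,
i.e. it is an `𝔽₂`-vector space of dimension `1 + f·⌈n/2⌉` (here `⌈n/2⌉ = (n+1)/2` in
natural division). -/
theorem filtration_step_card
    (f : ℕ) (hf : f ≠ 0)
    (F : Type*) [Field F] [Fintype F] (hcard : Fintype.card F = 2 ^ f)
    (W : AddSubgroup (LaurentSeries F))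
    (hW : (W : Set (LaurentSeries F)) = Set.range (fun y : LaurentSeries F => y ^ 2 - y))
    (V : ℕ → AddSubgroup (LaurentSeries F))
    (hV : ∀ n : ℕ, (V n : Set (LaurentSeries F)) =
      {x : LaurentSeries F | ∀ m : ℤ, m < -(n : ℤ) → x.coeff m = 0}) :
    ∀ n : ℕ,
      Nat.card (AddSubgroup.map (QuotientAddGroup.mk' W) (V n))
        = 2 * (2 ^ f) ^ ((n + 1) / 2) :=
  filtration_step_card_general f F hcard W hW V hV
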